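/- arXiv:2001.09527 — 2 statements merged into one kernel-verified Lean document; each statement's English description precedes it below -/
import Mathlib

section
/- For constant matrices X, Y ∈ M_n(ℂ), the curve t ↦ exp(t(X+Y))·exp(−tX) is the flow of the time-dependent field s ↦ exp(sX)·Y·exp(−sX); i.e., it solves γ'(t) = γ(t)·(exp(tX)·Y·exp(−tX)) with γ(0) = I. -/
open NormedSpace

attribute [local instance] Matrix.linftyOpNormedRing Matrix.linftyOpNormedAlgebra

section BanachAlgebra

variable {𝔸 : Type*} [NormedRing 𝔸] [NormedAlgebra ℝ 𝔸] [CompleteSpace 𝔸]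

theorem NormedSpace.exp_neg_mul_exp (x : 𝔸) : exp (-x) * exp x = 1 := by
  have hball : ∀ y : 𝔸, y ∈ Metric.eball (0 : 𝔸) (expSeries ℝ 𝔸).radius := fun y => by
    simp [expSeries_radius_eq_top]
  rw [← exp_add_of_commute_of_mem_ball (Commute.refl x).neg_left (hball _) (hball _),
    neg_add_cancel, exp_zero]

/-- The product rule gives `γ' = exp(t(X+Y)) Y exp(-tX)`; inserting `exp(-tX) exp(tX) = 1`
after `γ = exp(t(X+Y)) exp(-tX)` turns this into `γ · exp(tX) Y exp(-tX)`. -/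
theorem hasDerivAt_exp_smul_add_mul_exp_neg_smul (X Y : 𝔸) (t : ℝ) :
    HasDerivAt (fun t : ℝ => exp (t • (X + Y)) * exp (-(t • X)))
      (exp (t • (X + Y)) * exp (-(t • X)) * (exp (t • X) * Y * exp (-(t • X)))) t := by
  have hprod := (hasDerivAt_exp_smul_const (X + Y) t).fun_mul (hasDerivAt_exp_smul_const' (-X) t)
  simp only [smul_neg] at hprod
  convert hprod using 1
  calc _ = exp (t • (X + Y)) * (exp (-(t • X)) * exp (t • X)) * Y * exp (-(t • X)) := by
        noncomm_ring
    _ = _ := by rw [exp_neg_mul_exp, mul_one]; noncomm_ring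

end BanachAlgebra

/-- `t ↦ exp(t(X+Y)) exp(−tX)` is the chronological flow of `s ↦ exp(sX) Y exp(−sX)`. -/
theorem stmt_5 (n : ℕ) (X Y : Matrix (Fin n) (Fin n) ℂ) :
    (fun t : ℝ => exp (t • (X + Y)) * exp (-(t • X))) 0 = 1 ∧
    ∀ t : ℝ, HasDerivAt (fun t : ℝ => exp (t • (X + Y)) * exp (-(t • X)))
      ((exp (t • (X + Y)) * exp (-(t • X))) *
        (exp (t • X) * Y * exp (-(t • X)))) t :=
  ⟨by simp, hasDerivAt_exp_smul_add_mul_exp_neg_smul X Y⟩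
end

section
/- The Fréchet differential of the matrix exponential exp : M_n(ℂ) → M_n(ℂ) at X in the direction Y is D(exp)_X(Y) = (∫_0^1 exp(sX)·Y·exp(−sX) ds)·exp(X). -/
/-!
Differentiating `s ↦ exp (s • x) * exp ((1 - s) • (x + z))` gives Duhamel's formula
`exp (x + z) - exp x = ∫₀¹ exp (s • x) * z * exp ((1 - s) • (x + z)) ds`.
With `z = ε • y` the difference quotient of `ε ↦ exp (x + ε • y)` at `0` is therefore exactly a
parametric integral that is continuous in `ε`, and its value at `ε = 0` is the claimed derivative
because `exp ((1 - s) • x) = exp (-(s • x)) * exp x`.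
-/

open MeasureTheory

theorem hasDerivAt_of_sub_eq_smul {𝕜 E : Type*} [NontriviallyNormedField 𝕜]
    [NormedAddCommGroup E] [NormedSpace 𝕜 E] {f g : 𝕜 → E} {x : 𝕜} (hg : ContinuousAt g x)
    (h : ∀ y, f y - f x = (y - x) • g y) : HasDerivAt f (g x) x := by
  rw [hasDerivAt_iff_tendsto_slope]
  refine (hg.tendsto.mono_left nhdsWithin_le_nhds).congr' ?_
  filter_upwards [self_mem_nhdsWithin] with y hy
  rw [slope_def_module, h, smul_smul, inv_mul_cancel₀ (sub_ne_zero.2 hy), one_smul]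

namespace NormedSpace

variable {𝔸 : Type*} [NormedRing 𝔸] [NormedAlgebra ℝ 𝔸] [CompleteSpace 𝔸]

theorem hasDerivAt_exp_one_sub_smul (x : 𝔸) (t : ℝ) :
    HasDerivAt (fun s : ℝ => exp ((1 - s) • x)) (-(x * exp ((1 - t) • x))) t := by
  simpa [Function.comp_def] using
    (hasDerivAt_exp_smul_const' x (1 - t)).scomp t ((hasDerivAt_id t).const_sub 1)

theorem exp_one_sub_smul (x : 𝔸) (s : ℝ) : exp ((1 - s) • x) = exp (-(s • x)) * exp x := by
  let +nondep : NormedAlgebra ℚ 𝔸 := .restrictScalars ℚ ℝ 𝔸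
  rw [sub_smul, one_smul, sub_eq_neg_add,
    exp_add_of_commute ((Commute.refl x).smul_left s).neg_left]

theorem exp_add_sub_exp_eq_integral (x z : 𝔸) :
    exp (x + z) - exp x = ∫ s in (0:ℝ)..1, exp (s • x) * z * exp ((1 - s) • (x + z)) := by
  have hderiv : ∀ s ∈ Set.uIcc (0:ℝ) 1,
      HasDerivAt (fun s : ℝ => exp (s • x) * exp ((1 - s) • (x + z)))
        (-(exp (s • x) * z * exp ((1 - s) • (x + z)))) s := by
    intro s _
    refine ((hasDerivAt_exp_smul_const x s).mul
      (hasDerivAt_exp_one_sub_smul (x + z) s)).congr_deriv ?_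
    noncomm_ring
  let +nondep : NormedAlgebra ℚ 𝔸 := .restrictScalars ℚ ℝ 𝔸
  have hcont : Continuous fun s : ℝ => exp (s • x) * z * exp ((1 - s) • (x + z)) := by fun_prop
  have key :=
    intervalIntegral.integral_eq_sub_of_hasDerivAt hderiv (hcont.neg.intervalIntegrable 0 1)
  simp only [intervalIntegral.integral_neg, one_smul, sub_self, sub_zero, zero_smul, exp_zero,
    one_mul, mul_one] at key
  rw [← neg_sub, ← key, neg_neg]

theorem hasDerivAt_exp_add_smul (x y : 𝔸) :
    HasDerivAt (fun ε : ℝ => exp (x + ε • y))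
      ((∫ s in (0:ℝ)..1, exp (s • x) * y * exp (-(s • x))) * exp x) 0 := by
  set g : ℝ → 𝔸 := fun ε => ∫ s in (0:ℝ)..1, exp (s • x) * y * exp ((1 - s) • (x + ε • y))
  let +nondep : NormedAlgebra ℚ 𝔸 := .restrictScalars ℚ ℝ 𝔸
  have hg : Continuous g :=
    intervalIntegral.continuous_parametric_intervalIntegral_of_continuous' (by fun_prop) 0 1
  have hg0 : g 0 = (∫ s in (0:ℝ)..1, exp (s • x) * y * exp (-(s • x))) * exp x := by
    have hint : IntervalIntegrable (fun s : ℝ => exp (s • x) * y * exp (-(s • x))) volume 0 1 :=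
      Continuous.intervalIntegrable (by fun_prop) 0 1
    simp only [g, zero_smul, add_zero, exp_one_sub_smul, ← mul_assoc]
    exact ((ContinuousLinearMap.mul ℝ 𝔸).flip (exp x)).intervalIntegral_comp_comm hint
  rw [← hg0]
  refine hasDerivAt_of_sub_eq_smul hg.continuousAt fun ε => ?_
  simp only [zero_smul, add_zero, sub_zero, exp_add_sub_exp_eq_integral x (ε • y), g,
    mul_smul_comm, smul_mul_assoc, intervalIntegral.integral_smul]

end NormedSpace

open NormedSpace

attribute [local instance] Matrix.linftyOpNormedRing Matrix.linftyOpNormedAlgebra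
attribute [local instance] Matrix.instCompleteSpace

/-- Directional derivative of the matrix exponential:
`D(exp)_X(Y) = (∫₀¹ exp(sX) Y exp(−sX) ds) · exp X`. -/
theorem stmt_7 (n : ℕ) (X Y : Matrix (Fin n) (Fin n) ℂ) :
    HasDerivAt (fun ε : ℝ => exp (X + ε • Y))
      ((∫ s in (0:ℝ)..1, exp (s • X) * Y * exp (-(s • X))) * exp X) 0 :=
  hasDerivAt_exp_add_smul X Y
end
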